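/- Let A_n be the two-generator Artin group with odd exponent n ≥ 3, Δ = (aba⋯)_n, and z = Δ². Let A_n' be the index-two subgroup of even-length words. Then b^{2n} z⁻¹ lies in the commutator subgroup [A_n', A_n']. -/

import Mathlib

/-- The alternating product `x y x y ⋯` of length `n`. -/
def altG {G : Type*} [Monoid G] : ℕ → G → G → G
  | 0, _, _ => 1
  | n + 1, x, y => x * altG n y x

lemma map_altG {M N : Type*} [Monoid M] [Monoid N] (f : M →* N) :
    ∀ (n : ℕ) (x y : M), f (altG n x y) = altG n (f x) (f y)
  | 0, _, _ => by simp [altG]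
  | n + 1, x, y => by simp [altG, map_altG f n]

/-- The braid relation of the two-generator Artin group with exponent `n`. -/
def braidRels (n : ℕ) : Set (FreeGroup Bool) :=
  {altG n (FreeGroup.of true) (FreeGroup.of false) *
    (altG n (FreeGroup.of false) (FreeGroup.of true))⁻¹}

/-- The two-generator Artin group `A_n`. -/
abbrev ArtinTwo (n : ℕ) := PresentedGroup (braidRels n)

/-- The generator `a`. -/
def artinA (n : ℕ) : ArtinTwo n := PresentedGroup.of true

/-- The generator `b`. -/
def artinB (n : ℕ) : ArtinTwo n := PresentedGroup.of false

/-- The Garside element `Δ = (aba⋯)_n`. -/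
def artinDelta (n : ℕ) : ArtinTwo n := altG n (artinA n) (artinB n)

/-- The homomorphism `A_n → ℤ/2` sending both generators to `1`. -/
def toZ2 (n : ℕ) : ArtinTwo n →* Multiplicative (ZMod 2) :=
  PresentedGroup.toGroup (f := fun _ => Multiplicative.ofAdd 1) (by
    intro r hr
    simp only [braidRels, Set.mem_singleton_iff] at hr
    subst hr
    simp [map_altG])

/-- The index-two subgroup `A_n'` of even-length words. -/
def AnPrime (n : ℕ) : Subgroup (ArtinTwo n) := (toZ2 n).ker

/-!
Let `n = 2k + 1` and pass to the abelianization of `A_n'`, written additively with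
`x = a²`, `y = ab`, `z = ba⁻¹`, so that `ba = z + x` and `b² = z + y`. Multiplying the braid
relation `(ab)ᵏa = (ba)ᵏb` by `a` on either side gives `k y + x = (k + 1)(z + x)` and
`x + k (z + x) = (k + 1) y`; hence `x = z + y` and `n z = 0`. Since `Δ² = (ab)ⁿ`, the class of
`b^{2n} Δ⁻²` is `n (z + y) - n y = n z = 0`.
-/

section Monoid

variable {M : Type*} [Monoid M]

lemma altG_two_mul_add_one (x y : M) : ∀ k : ℕ, altG (2 * k + 1) x y = (x * y) ^ k * x
  | 0 => by simp [altG]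
  | k + 1 => by
    rw [show 2 * (k + 1) + 1 = 2 * k + 1 + 1 + 1 by ring, altG, altG, altG_two_mul_add_one x y k,
      pow_succ']
    simp only [mul_assoc]

variable {a b : M} {k : ℕ}

lemma sq_of_braid (h : (a * b) ^ k * a = (b * a) ^ k * b) :
    ((a * b) ^ k * a) ^ 2 = (a * b) ^ (2 * k + 1) := by
  calc ((a * b) ^ k * a) ^ 2 = (a * b) ^ k * (a * (b * a) ^ k) * b := by
        rw [sq, mul_assoc, h]; simp only [mul_assoc]
    _ = (a * b) ^ (2 * k + 1) := by
        rw [← mul_pow_mul, two_mul, pow_succ, pow_add]; simp only [mul_assoc]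

lemma pow_mul_sq_of_braid (h : (a * b) ^ k * a = (b * a) ^ k * b) :
    (a * b) ^ k * a ^ 2 = (b * a) ^ (k + 1) := by
  rw [sq, ← mul_assoc, h, mul_assoc, ← pow_succ]

lemma sq_mul_pow_of_braid (h : (a * b) ^ k * a = (b * a) ^ k * b) :
    a ^ 2 * (b * a) ^ k = (a * b) ^ (k + 1) := by
  rw [sq, mul_assoc, ← mul_pow_mul, h, ← mul_assoc, ← mul_pow_mul, mul_assoc, ← pow_succ]

end Monoid

section CommGroup

variable {M : Type*} [CommGroup M] {x y z : M} {k : ℕ}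

lemma eq_mul_of_pow_mul_eq (h₁ : y ^ k * x = (z * x) ^ (k + 1))
    (h₂ : x * (z * x) ^ k = y ^ (k + 1)) : x = z * y := by
  have h := congrArg₂ (· * ·) h₁ h₂
  rw [pow_succ (z * x), pow_succ y] at h
  have h' : y ^ k * (z * x) ^ k * x * x = y ^ k * (z * x) ^ k * x * (z * y) := by
    simpa only [mul_comm, mul_assoc, mul_left_comm] using h
  exact mul_left_cancel h'

lemma pow_eq_one_of_pow_mul_eq (h₁ : y ^ k * x = (z * x) ^ (k + 1))
    (h₂ : x * (z * x) ^ k = y ^ (k + 1)) : z ^ (2 * k + 1) = 1 := by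
  rw [eq_mul_of_pow_mul_eq h₁ h₂] at h₂
  refine mul_eq_right.mp (Eq.trans ?_ h₂)
  rw [pow_succ, two_mul, pow_add, mul_pow, mul_pow, pow_succ]
  simp only [mul_comm, mul_assoc, mul_left_comm]

end CommGroup

namespace Subgroup

variable {G : Type*} [Group G] {H : Subgroup G}

lemma coe_mem_commutator_of_abelianization_eq_one {w : H} (hw : Abelianization.of w = 1) :
    (w : G) ∈ ⁅H, H⁆ := by
  rw [← H.map_subtype_commutator, ← Abelianization.ker_of]
  exact ⟨w, hw, rfl⟩

lemma pow_mul_inv_sq_mem_commutator_of_braid {a b : G} {k : ℕ} (haa : a ^ 2 ∈ H)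
    (hab : a * b ∈ H) (hba : b * a⁻¹ ∈ H) (braid : (a * b) ^ k * a = (b * a) ^ k * b) :
    b ^ (2 * (2 * k + 1)) * (((a * b) ^ k * a) ^ 2)⁻¹ ∈ ⁅H, H⁆ := by
  let x : H := ⟨a ^ 2, haa⟩
  let y : H := ⟨a * b, hab⟩
  let z : H := ⟨b * a⁻¹, hba⟩
  have hzx : (z : G) * x = b * a := by simp [x, z, sq]
  have hzy : (z : G) * y = b ^ 2 := by simp [y, z, sq]
  have h₁ : y ^ k * x = (z * x) ^ (k + 1) := by
    ext; simpa only [coe_mul, coe_pow, hzx] using pow_mul_sq_of_braid braid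
  have h₂ : x * (z * x) ^ k = y ^ (k + 1) := by
    ext; simpa only [coe_mul, coe_pow, hzx] using sq_mul_pow_of_braid braid
  have hw : b ^ (2 * (2 * k + 1)) * (((a * b) ^ k * a) ^ 2)⁻¹ =
      (((z * y) ^ (2 * k + 1) * (y ^ (2 * k + 1))⁻¹ : H) : G) := by
    rw [sq_of_braid braid, pow_mul, ← hzy]
    rfl
  have hz : Abelianization.of z ^ (2 * k + 1) = 1 := by
    apply pow_eq_one_of_pow_mul_eq (x := Abelianization.of x) (y := Abelianization.of y)
    · simpa only [map_mul, map_pow] using congrArg Abelianization.of h₁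
    · simpa only [map_mul, map_pow] using congrArg Abelianization.of h₂
  rw [hw]
  apply coe_mem_commutator_of_abelianization_eq_one
  simp only [map_mul, map_inv, map_pow, mul_pow, hz, one_mul, mul_inv_cancel]

end Subgroup

lemma altG_artinA_artinB (n : ℕ) :
    altG n (artinA n) (artinB n) = altG n (artinB n) (artinA n) := by
  have h := PresentedGroup.mk_eq_mk_of_mul_inv_mem (rels := braidRels n) (Set.mem_singleton _)
  rwa [map_altG, map_altG] at h

lemma mem_AnPrime_iff {n : ℕ} {g : ArtinTwo n} : g ∈ AnPrime n ↔ toZ2 n g = 1 :=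
  MonoidHom.mem_ker

lemma toZ2_artinA (n : ℕ) : toZ2 n (artinA n) = Multiplicative.ofAdd 1 :=
  PresentedGroup.toGroup.of _

lemma toZ2_artinB (n : ℕ) : toZ2 n (artinB n) = Multiplicative.ofAdd 1 :=
  PresentedGroup.toGroup.of _

theorem artin_odd_b2n_in_commutator_general (n : ℕ) (hodd : Odd n) :
    (artinB n) ^ (2 * n) * ((artinDelta n) ^ 2)⁻¹ ∈ ⁅AnPrime n, AnPrime n⁆ := by
  obtain ⟨k, rfl⟩ := hodd
  have braid := altG_artinA_artinB (2 * k + 1)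
  rw [altG_two_mul_add_one, altG_two_mul_add_one] at braid
  rw [artinDelta, altG_two_mul_add_one]
  refine Subgroup.pow_mul_inv_sq_mem_commutator_of_braid ?_ ?_ ?_ braid
  all_goals
    simp only [mem_AnPrime_iff, map_mul, map_pow, map_inv, toZ2_artinA, toZ2_artinB]
    rfl

/-- for odd `n`, with `z = Δ²`, the element `b^{2n} z⁻¹` lies in the commutator
subgroup of the even-length index-two subgroup `A_n'`. -/
theorem artin_odd_b2n_in_commutator (n : ℕ) (hodd : Odd n) (hn : 3 ≤ n) :
    (artinB n) ^ (2 * n) * ((artinDelta n) ^ 2)⁻¹ ∈ ⁅AnPrime n, AnPrime n⁆ :=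
  artin_odd_b2n_in_commutator_general n hodd
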